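/- arXiv:1109.2353 — 4 statements merged into one kernel-verified Lean document; each statement's English description precedes it below -/
import Mathlib

section
/- Let B = K[t_1,…,t_s,y_1,…,y_n] be a polynomial ring over an arbitrary field K. If I′ is a binomial ideal of B (i.e., an ideal generated by a set of binomials, where a binomial is a difference m_1 − m_2 of two monomials), then the contraction I′ ∩ K[t_1,…,t_s] is a binomial ideal of K[t_1,…,t_s]. -/
/-- A binomial of a polynomial ring: a difference `m₁ - m₂` of two monomials. -/
def IsBinomial {σ K : Type*} [CommRing K] (f : MvPolynomial σ K) : Prop :=
  ∃ a b : σ →₀ ℕ, f = MvPolynomial.monomial a (1 : K) - MvPolynomial.monomial b (1 : K)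

/-- A binomial ideal: an ideal generated by a set of binomials. -/
def IsBinomialIdeal {σ K : Type*} [CommRing K] (I : Ideal (MvPolynomial σ K)) : Prop :=
  ∃ G : Set (MvPolynomial σ K), (∀ g ∈ G, IsBinomial g) ∧ I = Ideal.span G

/-!
Call exponents `u, v` congruent when `x^u - x^v ∈ I`. This is an additive congruence, and because
`I` is generated by binomials, the induced ring map `R[σ →₀ ℕ] → R[(σ →₀ ℕ)/~]` kills `I`. Hence for
`p` in the contraction along a renaming `g`, the coefficients of `p` sum to zero over every fibre
of `a ↦ [g a]` (`g` acting on exponents), so `p` is a combination of binomials `x^a - x^b` with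
`g a ~ g b`, and these lie in the contraction.
-/

namespace AddMonoidAlgebra

theorem mapDomain_comp {R M N O : Type*} [Semiring R] (f : M → N) (g : N → O)
    (x : AddMonoidAlgebra R M) : mapDomain (g ∘ f) x = mapDomain g (mapDomain f x) := by
  ext
  simp [mapDomain, Finsupp.mapDomain_comp]

theorem mem_span_single_sub_single_of_mapDomain_eq_zero {R M N : Type*} [Ring R] (f : M → N)
    {x : AddMonoidAlgebra R M} (hx : mapDomain f x = 0) :
    x ∈ Submodule.span R {y | ∃ a b, f a = f b ∧ y = single a 1 - single b 1} := by
  cases isEmpty_or_nonempty M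
  · simpa using (show x = 0 by ext a; exact isEmptyElim a)
  -- `r` picks a point in each fibre of `f`: `y - mapDomain r y` is a combination of the
  -- binomials for every `y`, while `mapDomain r x = 0`.
  set r := Function.invFun f ∘ f
  have hr : mapDomain r x = 0 := by
    rw [mapDomain_comp, hx, mapDomain_zero]
  have key : ∀ y : AddMonoidAlgebra R M, y - mapDomain r y ∈
      Submodule.span R {y | ∃ a b, f a = f b ∧ y = single a 1 - single b 1} := by
    intro y
    induction y using induction_linear with
    | zero => simp
    | add y z hy hz =>
      rw [mapDomain_add, add_sub_add_comm]
      exact add_mem hy hz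
    | single a c =>
      rw [mapDomain_single, show single a c - single (r a) c = c • (single a 1 - single (r a) 1) by
        simp [smul_sub]]
      exact Submodule.smul_mem _ _
        (Submodule.subset_span ⟨a, r a, (Function.invFun_eq ⟨a, rfl⟩).symm, rfl⟩)
  simpa [hr] using key x

end AddMonoidAlgebra

open MvPolynomial

section

variable {σ τ R : Type*} [CommRing R]

def MvPolynomial.binomialCon (I : Ideal (MvPolynomial σ R)) : AddCon (σ →₀ ℕ) where
  r u v := monomial u 1 - monomial v 1 ∈ I
  iseqv :=
    { refl _ := by simp
      symm h := by simpa using I.neg_mem h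
      trans h₁ h₂ := by simpa using I.add_mem h₁ h₂ }
  add' {u v w x} h₁ h₂ := by
    have : monomial (u + w) (1 : R) - monomial (v + x) 1 =
        monomial w 1 * (monomial u 1 - monomial v 1) +
          monomial v 1 * (monomial w 1 - monomial x 1) := by
      simp only [mul_sub, monomial_mul, mul_one]
      rw [add_comm w u, add_comm w v, add_comm v x]
      abel
    simpa [this] using I.add_mem (I.mul_mem_left _ h₁) (I.mul_mem_left _ h₂)

theorem MvPolynomial.binomialCon_mk_eq_iff {I : Ideal (MvPolynomial σ R)} {u v : σ →₀ ℕ} :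
    (binomialCon I).mk' u = (binomialCon I).mk' v ↔ monomial u 1 - monomial v 1 ∈ I :=
  (binomialCon I).eq

theorem IsBinomialIdeal.le_ker_mapDomainRingHom {I : Ideal (MvPolynomial σ R)}
    (hI : IsBinomialIdeal I) :
    I ≤ RingHom.ker (AddMonoidAlgebra.mapDomainRingHom R (binomialCon I).mk') := by
  obtain ⟨G, hG, hIG⟩ := hI
  refine hIG.le.trans (Ideal.span_le.2 fun q hq => ?_)
  obtain ⟨a, b, rfl⟩ := hG q hq
  have hab := binomialCon_mk_eq_iff.2 (hIG ▸ Ideal.subset_span hq)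
  rw [SetLike.mem_coe, RingHom.mem_ker, map_sub, sub_eq_zero, ← single_eq_monomial,
    ← single_eq_monomial]
  simp only [AddMonoidAlgebra.mapDomainRingHom_apply, AddMonoidAlgebra.mapDomain_single, hab]

theorem isBinomialIdeal_of_subset_span {J : Ideal (MvPolynomial σ R)}
    (h : (J : Set (MvPolynomial σ R)) ⊆ Submodule.span R {p | IsBinomial p ∧ p ∈ J}) :
    IsBinomialIdeal J := by
  refine ⟨{p | IsBinomial p ∧ p ∈ J}, fun _ hp => hp.1, le_antisymm ?_ ?_⟩
  · exact fun p hp => Submodule.span_le_restrictScalars R _ _ (h hp)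
  · exact Ideal.span_le.2 fun _ hp => hp.2

theorem IsBinomialIdeal.comap_rename {I : Ideal (MvPolynomial σ R)} (hI : IsBinomialIdeal I)
    (g : τ → σ) : IsBinomialIdeal (I.comap (rename g)) := by
  refine isBinomialIdeal_of_subset_span fun p hp => ?_
  have hp₀ : AddMonoidAlgebra.mapDomain ((binomialCon I).mk' ∘ Finsupp.mapDomain g) p = 0 := by
    rw [AddMonoidAlgebra.mapDomain_comp]
    exact hI.le_ker_mapDomainRingHom hp
  refine Submodule.span_mono ?_
    (AddMonoidAlgebra.mem_span_single_sub_single_of_mapDomain_eq_zero _ hp₀)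
  rintro _ ⟨a, b, hab, rfl⟩
  refine ⟨⟨a, b, rfl⟩, ?_⟩
  simpa [Ideal.mem_comap, single_eq_monomial, rename_monomial] using binomialCon_mk_eq_iff.1 hab

end

/-- **Lemma.** Let `B = K[t_1,…,t_s,y_1,…,y_n]` be a polynomial ring over an arbitrary
field `K`. If `I'` is a binomial ideal of `B`, then the contraction
`I' ∩ K[t_1,…,t_s]` (the preimage of `I'` under the inclusion
`K[t_1,…,t_s] → B`, `t_i ↦ t_i`) is a binomial ideal of `K[t_1,…,t_s]`. -/
theorem contraction_of_binomial_ideal_isBinomialIdeal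
    {K : Type*} [Field K] {s n : ℕ}
    (I' : Ideal (MvPolynomial (Fin s ⊕ Fin n) K)) (h : IsBinomialIdeal I') :
    IsBinomialIdeal
      (Ideal.comap (MvPolynomial.rename (Sum.inl : Fin s → Fin s ⊕ Fin n)) I') :=
  h.comap_rename Sum.inl
end

section
/- Let B = K[t_1,…,t_s,y_1,…,y_n] be a polynomial ring over the finite field K = 𝔽_q with q elements. Then the vanishing ideal of X* satisfies I(X*) = (t_1 − y^{v_1}, …, t_s − y^{v_s}, y_1^{q−1} − 1, …, y_n^{q−1} − 1) ∩ S, where the intersection is the contraction of the displayed ideal of B along the natural inclusion S → B. -/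
/-!
Sending `t_i ↦ y^{v_i}` identifies `B` modulo `(t_i - y^{v_i})` with `K[y]`, so the ideal of `B`
is the preimage of `T = (y_j^{q-1} - 1)` under this substitution, and its contraction to `S` is
the preimage of `T` under `t_i ↦ y^{v_i}`. By the combinatorial Nullstellensatz with every
coordinate ranging over `Kˣ`, `T` is the vanishing ideal of the torus `(Kˣ)ⁿ`, because
`∏_{r ≠ 0} (y - r) = y^{q-1} - 1`; and `X*` is the image of that torus under `x ↦ (x^{v_i})_i`.
-/

open MvPolynomial

/-- The affine algebraic toric set parameterized by the monomials
`y^{v_1}, …, y^{v_s}`: the set of points `(x^{v_1}, …, x^{v_s}) ∈ K^s`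
with all `x_i` nonzero. -/
def Xstar (K : Type*) [Field K] {s n : ℕ} (v : Fin s → Fin n → ℕ) : Set (Fin s → K) :=
  {p | ∃ x : Fin n → K, (∀ j, x j ≠ 0) ∧ ∀ i, p i = ∏ j, x j ^ v i j}

open Polynomial in
theorem FiniteField.prod_X_sub_C_erase_zero (K : Type*) [Field K] [Fintype K] [DecidableEq K] :
    ∏ r ∈ Finset.univ.erase (0 : K), (Polynomial.X - Polynomial.C r) =
      Polynomial.X ^ (Fintype.card K - 1) - 1 := by
  have hmonic : (Polynomial.X ^ (Fintype.card K - 1) - 1 : K[X]).Monic := by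
    have := Fintype.one_lt_card (α := K)
    simpa using monic_X_pow_sub_C (1 : K) (by omega : Fintype.card K - 1 ≠ 0)
  refine (eq_of_monic_of_dvd_of_natDegree_le (monic_prod_of_monic _ _ fun r _ => monic_X_sub_C r)
    hmonic ?_ ?_).symm
  · rw [Finset.prod_eq_multiset_prod, Multiset.prod_X_sub_C_dvd_iff_le_roots hmonic.ne_zero,
      Multiset.le_iff_subset (Finset.nodup _)]
    intro r hr
    rw [mem_roots hmonic.ne_zero, IsRoot, Polynomial.eval_sub, Polynomial.eval_pow,
      Polynomial.eval_X, Polynomial.eval_one,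
      FiniteField.pow_card_sub_one_eq_one r (Finset.ne_of_mem_erase hr), sub_self]
  · rw [natDegree_prod_of_monic _ _ fun r _ => monic_X_sub_C r, ← Polynomial.C_1,
    natDegree_X_pow_sub_C]
    simp [Finset.card_erase_of_mem]

namespace MvPolynomial

theorem vanishingIdeal_torus (K σ : Type*) [Field K] [Fintype K] [Finite σ] :
    vanishingIdeal K {x : σ → K | ∀ j, x j ≠ 0} =
      Ideal.span (Set.range fun j : σ => (X j : MvPolynomial σ K) ^ (Fintype.card K - 1) - 1) := by
  classical
  refine le_antisymm (fun g hg => ?_) ?_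
  · obtain ⟨h, -, rfl⟩ := combinatorial_nullstellensatz_exists_linearCombination
      (fun _ => Finset.univ.erase 0) (fun _ => ⟨1, by simp⟩) g
      fun x hx => hg x fun j => Finset.ne_of_mem_erase (hx j)
    have hprod (j : σ) : ∏ r ∈ Finset.univ.erase (0 : K), (X j - C r) =
        (X j : MvPolynomial σ K) ^ (Fintype.card K - 1) - 1 := by
      simpa using congrArg (Polynomial.aeval (X j : MvPolynomial σ K))
        (FiniteField.prod_X_sub_C_erase_zero K)
    simp only [hprod]
    exact (Finsupp.range_linearCombination (MvPolynomial σ K)).le (LinearMap.mem_range_self _ h)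
  · rw [Ideal.span_le]
    rintro _ ⟨j, rfl⟩ x hx
    simp [FiniteField.pow_card_sub_one_eq_one _ (hx j)]

theorem vanishingIdeal_image_aeval {K σ τ : Type*} [Field K] (m : σ → MvPolynomial τ K)
    (V : Set (τ → K)) :
    vanishingIdeal K ((fun x i => aeval x (m i)) '' V) = (vanishingIdeal K V).comap (aeval m) := by
  ext f
  simp only [mem_vanishingIdeal_iff, Ideal.mem_comap, Set.forall_mem_image, comp_aeval_apply]

variable {R σ τ : Type*} [CommRing R]

theorem sub_rename_inr_aeval_mem_span (m : σ → MvPolynomial τ R) (g : MvPolynomial (σ ⊕ τ) R) :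
    g - rename Sum.inr (aeval (Sum.elim m X) g) ∈
      Ideal.span (Set.range fun i => X (Sum.inl i) - rename Sum.inr (m i)) := by
  set J := Ideal.span (Set.range fun i => (X (Sum.inl i) : MvPolynomial (σ ⊕ τ) R) -
    rename Sum.inr (m i))
  rw [← Ideal.Quotient.eq]
  show Ideal.Quotient.mkₐ R J g =
    ((Ideal.Quotient.mkₐ R J).comp ((rename Sum.inr).comp (aeval (Sum.elim m X)))) g
  congr 1
  ext (i | j)
  · simp only [AlgHom.comp_apply, aeval_X, Sum.elim_inl, Ideal.Quotient.mkₐ_eq_mk]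
    exact Ideal.Quotient.eq.2 (Ideal.subset_span (Set.mem_range_self i))
  · simp only [AlgHom.comp_apply, aeval_X, Sum.elim_inr, rename_X]

theorem span_X_sub_rename_sup_map_rename_eq_comap (m : σ → MvPolynomial τ R)
    (T : Ideal (MvPolynomial τ R)) :
    Ideal.span (Set.range fun i => X (Sum.inl i) - rename Sum.inr (m i)) ⊔ T.map (rename Sum.inr) =
      T.comap (aeval (Sum.elim m X)) := by
  have aeval_rename_inr (p : MvPolynomial τ R) : aeval (Sum.elim m X) (rename Sum.inr p) = p := by
    rw [aeval_rename, Sum.elim_comp_inr, aeval_X_left_apply]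
  refine le_antisymm (sup_le ?_ ?_) fun g hg => ?_
  · rw [Ideal.span_le]
    rintro _ ⟨i, rfl⟩
    rw [SetLike.mem_coe, Ideal.mem_comap, map_sub, aeval_X, Sum.elim_inl, aeval_rename_inr, sub_self]
    exact T.zero_mem
  · rw [Ideal.map_le_iff_le_comap]
    intro p hp
    rwa [Ideal.mem_comap, Ideal.mem_comap, aeval_rename_inr]
  · rw [← sub_add_cancel g (rename Sum.inr (aeval (Sum.elim m X) g))]
    exact Ideal.add_mem _ (Ideal.mem_sup_left (sub_rename_inr_aeval_mem_span m g))
      (Ideal.mem_sup_right (Ideal.mem_map_of_mem _ hg))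

end MvPolynomial

/-- **Theorem.** Over the finite field `K = 𝔽_q`, the vanishing ideal of `X*` is the
contraction to `S = K[t_1,…,t_s]` of the ideal
`(t_1 - y^{v_1}, …, t_s - y^{v_s}, y_1^{q-1} - 1, …, y_n^{q-1} - 1)` of
`B = K[t_1,…,t_s,y_1,…,y_n]`. -/
theorem vanishingIdeal_Xstar_eq_contraction
    {K : Type*} [Field K] [Fintype K] {q s n : ℕ} (hq : Fintype.card K = q)
    (v : Fin s → Fin n → ℕ) (f : MvPolynomial (Fin s) K) :
    (∀ p ∈ Xstar K v, eval p f = 0) ↔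
      f ∈ Ideal.comap (rename (Sum.inl : Fin s → Fin s ⊕ Fin n))
        (Ideal.span
          ((Set.range fun i : Fin s =>
              (X (Sum.inl i) - ∏ j, X (Sum.inr j) ^ v i j :
                MvPolynomial (Fin s ⊕ Fin n) K)) ∪
           (Set.range fun j : Fin n =>
              (X (Sum.inr j) ^ (q - 1) - 1 : MvPolynomial (Fin s ⊕ Fin n) K)))) := by
  subst hq
  set m : Fin s → MvPolynomial (Fin n) K := fun i => ∏ j, X j ^ v i j
  have hXstar : Xstar K v = (fun x i => aeval x (m i)) '' {x | ∀ j, x j ≠ 0} := by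
    ext p
    simp [Xstar, m, funext_iff, eq_comm]
  have hI : Ideal.span
      ((Set.range fun i : Fin s =>
          (X (Sum.inl i) - ∏ j, X (Sum.inr j) ^ v i j : MvPolynomial (Fin s ⊕ Fin n) K)) ∪
        (Set.range fun j : Fin n =>
          (X (Sum.inr j) ^ (Fintype.card K - 1) - 1 : MvPolynomial (Fin s ⊕ Fin n) K))) =
      Ideal.span (Set.range fun i => X (Sum.inl i) - rename Sum.inr (m i)) ⊔
        (vanishingIdeal K {x : Fin n → K | ∀ j, x j ≠ 0}).map (rename Sum.inr) := by
    rw [vanishingIdeal_torus, Ideal.span_union, Ideal.map_span, ← Set.range_comp]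
    simp [m, Function.comp_def]
  rw [hI, span_X_sub_rename_sup_map_rename_eq_comap, Ideal.mem_comap, Ideal.mem_comap,
    aeval_rename, Sum.elim_comp_inl, ← Ideal.mem_comap, ← vanishingIdeal_image_aeval, ← hXstar]
  exact Iff.rfl
end

section
/- Let B = K[t_1,…,t_s,y_1,…,y_n] be a polynomial ring over an infinite field K. Then the vanishing ideal of X* satisfies I(X*) = (t_1 − y^{v_1}, …, t_s − y^{v_s}) ∩ S, where the intersection is the contraction of the displayed ideal of B along the natural inclusion S → B. -/
/-!
Substituting `y^{v_i}` for `t_i` defines `K[t] → K[y]`, and modulo `J = (t_i - y^{v_i})` every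
`f(t)` is congruent to its substitution `f(y^{v_1}, …, y^{v_s})`. If `f` vanishes on `X*`, that
substitution vanishes on the torus `(K^*)^n`, hence is zero because `K^*` is infinite, so `f ∈ J`.
Conversely `J` vanishes at every point `(x^{v_1}, …, x^{v_s}, x)`, so every `f ∈ J ∩ S` vanishes
on `X*`.
-/

open MvPolynomial

namespace MvPolynomial

variable {σ τ : Type*}

theorem algHom_apply_sub_apply_mem {R A : Type*} [CommSemiring R] [CommRing A] [Algebra R A]
    {I : Ideal A} {φ ψ : MvPolynomial σ R →ₐ[R] A} (h : ∀ i, φ (X i) - ψ (X i) ∈ I)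
    (f : MvPolynomial σ R) : φ f - ψ f ∈ I := by
  rw [← Ideal.Quotient.eq]
  have hcomp : (Ideal.Quotient.mkₐ R I).comp φ = (Ideal.Quotient.mkₐ R I).comp ψ :=
    algHom_ext fun i => by simpa using Ideal.Quotient.eq.mpr (h i)
  simpa using AlgHom.congr_fun hcomp f

theorem eq_zero_of_eval_eq_zero_of_forall_ne_zero {K : Type*} [Field K] [Infinite K]
    {p : MvPolynomial τ K} (h : ∀ x : τ → K, (∀ j, x j ≠ 0) → eval x p = 0) : p = 0 :=
  funext_set (fun _ => {0}ᶜ) (fun _ => (Set.finite_singleton 0).infinite_compl)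
    fun x hx => by simpa using h x fun j => hx j (Set.mem_univ j)

variable [Fintype τ]

noncomputable def monomialSubst {R : Type*} [CommSemiring R] (v : σ → τ → ℕ) :
    MvPolynomial σ R →ₐ[R] MvPolynomial τ R :=
  aeval fun i => ∏ j, X j ^ v i j

theorem eval_monomialSubst {R : Type*} [CommSemiring R] (v : σ → τ → ℕ) (x : τ → R)
    (f : MvPolynomial σ R) :
    eval x (monomialSubst v f) = eval (fun i => ∏ j, x j ^ v i j) f := by
  change aeval x (monomialSubst v f) = aeval (fun i => ∏ j, x j ^ v i j) f
  rw [monomialSubst, ← AlgHom.comp_apply, comp_aeval]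
  simp only [map_prod, map_pow, aeval_X]

noncomputable def graphIdeal {R : Type*} [CommRing R] (v : σ → τ → ℕ) :
    Ideal (MvPolynomial (σ ⊕ τ) R) :=
  Ideal.span (Set.range fun i => X (Sum.inl i) - ∏ j, X (Sum.inr j) ^ v i j)

theorem rename_inl_sub_rename_inr_monomialSubst_mem_graphIdeal {R : Type*} [CommRing R]
    (v : σ → τ → ℕ) (f : MvPolynomial σ R) :
    rename Sum.inl f - rename Sum.inr (monomialSubst v f) ∈ graphIdeal v := by
  refine algHom_apply_sub_apply_mem (ψ := (rename Sum.inr).comp (monomialSubst v))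
    (fun i => ?_) f
  have hi : X (Sum.inl i) - ∏ j, X (Sum.inr j) ^ v i j ∈ graphIdeal (R := R) v :=
    Ideal.subset_span ⟨i, rfl⟩
  simpa [monomialSubst] using hi

theorem graphIdeal_le_ker_eval {R : Type*} [CommRing R] (v : σ → τ → ℕ) (x : τ → R) :
    graphIdeal v ≤ RingHom.ker (eval (Sum.elim (fun i => ∏ j, x j ^ v i j) x)) := by
  rw [graphIdeal, Ideal.span_le]
  rintro _ ⟨i, rfl⟩
  simp

end MvPolynomial

/-- **Proposition.** Over an infinite field `K`, the vanishing ideal of `X*` is the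
contraction to `S = K[t_1,…,t_s]` of the ideal `(t_1 - y^{v_1}, …, t_s - y^{v_s})`
of `B = K[t_1,…,t_s,y_1,…,y_n]`. -/
theorem vanishingIdeal_Xstar_eq_contraction_of_infinite
    {K : Type*} [Field K] [Infinite K] {s n : ℕ}
    (v : Fin s → Fin n → ℕ) (f : MvPolynomial (Fin s) K) :
    (∀ p ∈ Xstar K v, eval p f = 0) ↔
      f ∈ Ideal.comap (rename (Sum.inl : Fin s → Fin s ⊕ Fin n))
        (Ideal.span
          (Set.range fun i : Fin s =>
            (X (Sum.inl i) - ∏ j, X (Sum.inr j) ^ v i j :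
              MvPolynomial (Fin s ⊕ Fin n) K))) := by
  constructor
  · intro hvan
    have hsubst : monomialSubst v f = 0 := eq_zero_of_eval_eq_zero_of_forall_ne_zero
      fun x hx => by rw [eval_monomialSubst]; exact hvan _ ⟨x, hx, fun _ => rfl⟩
    simpa [hsubst, graphIdeal] using rename_inl_sub_rename_inr_monomialSubst_mem_graphIdeal v f
  · rintro hf p ⟨x, -, hpx⟩
    obtain rfl : p = fun i => ∏ j, x j ^ v i j := funext hpx
    simpa [eval_rename] using graphIdeal_le_ker_eval v x hf
end

section
/- Let K be an infinite field. Then the vanishing ideal I(X*) of the affine algebraic toric set X* equals the kernel of the K-algebra homomorphism φ : K[t_1,…,t_s] → K[y_1,…,y_n] determined by φ(t_i) = y^{v_i} for i = 1,…,s; that is, I(X*) is the toric ideal of the monomial subring K[y^{v_1},…,y^{v_s}]. -/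
/-!
A polynomial `f(t)` vanishes on `X*` exactly when `f(x^{v_1}, …, x^{v_s}) = 0` for every
`x ∈ (K^*)^n`, i.e. when its image `f(y^{v_1}, …, y^{v_s})` under the toric map vanishes on the
torus `(K^*)^n`. Over an infinite field each `K^*` is infinite, so a polynomial vanishing on the
torus is zero.
-/

open MvPolynomial

/-- The vanishing ideal of `X* ⊆ K^s` in `S = K[t_1,…,t_s]`. -/
noncomputable def vanishingIdealXstar (K : Type*) [Field K] {s n : ℕ}
    (v : Fin s → Fin n → ℕ) : Ideal (MvPolynomial (Fin s) K) :=
  ⨅ p ∈ Xstar K v, RingHom.ker (eval p)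

namespace MvPolynomial

theorem eq_zero_of_eval_eq_zero_of_forall_ne_zero_s5 {R σ : Type*} [CommRing R] [IsDomain R]
    [Infinite R] {p : MvPolynomial σ R} (h : ∀ x : σ → R, (∀ i, x i ≠ 0) → eval x p = 0) :
    p = 0 :=
  funext_set (fun _ => {0}ᶜ) (fun _ => (Set.finite_singleton 0).infinite_compl)
    fun x hx => by simpa using h x fun i => hx i trivial

theorem eval_aeval {R σ τ : Type*} [CommSemiring R] (x : τ → R) (g : σ → MvPolynomial τ R)
    (f : MvPolynomial σ R) : eval x (aeval g f) = eval (fun i => eval x (g i)) f := by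
  rw [aeval_eq_bind₁]
  exact eval₂Hom_bind₁ (RingHom.id R) x g f

end MvPolynomial

/-- **Proposition.** Over an infinite field `K`, the vanishing ideal `I(X*)` equals the
kernel of the `K`-algebra homomorphism `K[t_1,…,t_s] → K[y_1,…,y_n]`, `t_i ↦ y^{v_i}`;
that is, `I(X*)` is the toric ideal of the monomial subring `K[y^{v_1},…,y^{v_s}]`. -/
theorem vanishingIdeal_Xstar_eq_toric_ideal
    {K : Type*} [Field K] [Infinite K] {s n : ℕ} (v : Fin s → Fin n → ℕ) :
    vanishingIdealXstar K v =
      RingHom.ker (aeval (fun i : Fin s => ∏ j, X j ^ v i j :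
        Fin s → MvPolynomial (Fin n) K) :
          MvPolynomial (Fin s) K →ₐ[K] MvPolynomial (Fin n) K) := by
  ext f
  have eval_toric (x : Fin n → K) :
      eval x (aeval (fun i : Fin s => ∏ j, X j ^ v i j) f) =
        eval (fun i => ∏ j, x j ^ v i j) f := by
    simp only [eval_aeval, map_prod, map_pow, eval_X]
  simp only [vanishingIdealXstar, Xstar, Ideal.mem_iInf, RingHom.mem_ker, Set.mem_ofPred_eq]
  constructor
  · intro hf
    refine eq_zero_of_eval_eq_zero_of_forall_ne_zero_s5 fun x hx => ?_
    rw [eval_toric]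
    exact hf _ ⟨x, hx, fun _ => rfl⟩
  · rintro hf p ⟨x, -, hp⟩
    rw [funext hp, ← eval_toric, hf, map_zero]
end
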